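/- Fix a real ρ ≠ 0. Suppose that for each σ ∈ {ρ, −ρ} there are given twice differentiable matrix functions F_+(·,σ), F_-(·,σ), F̄_+(·,σ), F̄_-(·,σ) : ℝ → M_m(ℂ) and matrices A(σ), B(σ), C(σ), D(σ) ∈ M_m(ℂ) such that: (i) all matrix Wronskians ⟨F̄_±(·,σ'), F_±(·,σ'')⟩ with σ', σ'' ∈ {ρ,−ρ} are constant in x; (ii) ⟨F̄_-(·,σ), F_-(·,σ)⟩ = 0_m, ⟨F̄_-(·,σ), F_-(·,−σ)⟩ = −2iσ·I_m, ⟨F̄_+(·,σ), F_+(·,σ)⟩ = 0_m, and ⟨F̄_+(·,σ), F_+(·,−σ)⟩ = 2iσ·I_m; (iii) F_+(x,σ) = F_-(x,−σ)A(σ) + F_-(x,σ)B(σ), F̄_+(x,σ) = A(−σ)*·F̄_-(x,−σ) + B(−σ)*·F̄_-(x,σ), and F_-(x,σ) = F_+(x,σ)C(σ) + F_+(x,−σ)D(σ) for all x ∈ ℝ. Then A(ρ) = D(−ρ)* and B(ρ) = −C(ρ)*. -/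

import Mathlib

open Matrix
open scoped Matrix.Norms.L2Operator

/-!
Expand `F̄₊(·,-ρ) = A(ρ)* F̄₋(·,ρ) + B(ρ)* F̄₋(·,-ρ)` on the left of the Wronskian
`⟨F̄₊(·,-ρ), F₋(·,∓ρ)⟩` and `F₋(·,∓ρ)` in the basis `F₊(·,±ρ)` on its right. By bilinearity each
expansion writes the Wronskian through the normalised ones of (ii), which vanish or equal `±2iρ`;
comparing the two results gives `A(ρ)* = D(-ρ)` and `B(ρ)* = -C(ρ)`.
-/

section Wronskian

variable {𝕜 R : Type*} [NontriviallyNormedField 𝕜] [NormedRing R] [NormedAlgebra 𝕜 R]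

theorem HasDerivAt.eq_mul_const_add_mul_const_of_eq {Y Y₁ Y₂ : 𝕜 → R} {Y' Y₁' Y₂' c₁ c₂ : R}
    {x : 𝕜}
    (hY : HasDerivAt Y Y' x) (hY₁ : HasDerivAt Y₁ Y₁' x) (hY₂ : HasDerivAt Y₂ Y₂' x)
    (h : ∀ t, Y t = Y₁ t * c₁ + Y₂ t * c₂) : Y' = Y₁' * c₁ + Y₂' * c₂ :=
  hY.unique <| funext h ▸ (hY₁.mul_const c₁).fun_add (hY₂.mul_const c₂)

theorem HasDerivAt.eq_const_mul_add_const_mul_of_eq {Z Z₁ Z₂ : 𝕜 → R} {Z' Z₁' Z₂' a₁ a₂ : R}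
    {x : 𝕜}
    (hZ : HasDerivAt Z Z' x) (hZ₁ : HasDerivAt Z₁ Z₁' x) (hZ₂ : HasDerivAt Z₂ Z₂' x)
    (h : ∀ t, Z t = a₁ * Z₁ t + a₂ * Z₂ t) : Z' = a₁ * Z₁' + a₂ * Z₂' :=
  hZ.unique <| funext h ▸ (hZ₁.const_mul a₁).fun_add (hZ₂.const_mul a₂)

def wronskian (Z Z' Y Y' : 𝕜 → R) (x : 𝕜) : R := Z' x * Y x - Z x * Y' x

variable {Z Z₁ Z₂ Y Y₁ Y₂ Z' Z₁' Z₂' Y' Y₁' Y₂' : 𝕜 → R} {x : 𝕜}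

theorem wronskian_of_eq_mul_add_mul_right {c₁ c₂ : R} (hY : HasDerivAt Y (Y' x) x)
    (hY₁ : HasDerivAt Y₁ (Y₁' x) x) (hY₂ : HasDerivAt Y₂ (Y₂' x) x)
    (h : ∀ t, Y t = Y₁ t * c₁ + Y₂ t * c₂) :
    wronskian Z Z' Y Y' x = wronskian Z Z' Y₁ Y₁' x * c₁ + wronskian Z Z' Y₂ Y₂' x * c₂ := by
  rw [wronskian, h x, hY.eq_mul_const_add_mul_const_of_eq hY₁ hY₂ h, wronskian, wronskian]
  noncomm_ring

theorem wronskian_of_eq_mul_add_mul_left {a₁ a₂ : R} (hZ : HasDerivAt Z (Z' x) x)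
    (hZ₁ : HasDerivAt Z₁ (Z₁' x) x) (hZ₂ : HasDerivAt Z₂ (Z₂' x) x)
    (h : ∀ t, Z t = a₁ * Z₁ t + a₂ * Z₂ t) :
    wronskian Z Z' Y Y' x = a₁ * wronskian Z₁ Z₁' Y Y' x + a₂ * wronskian Z₂ Z₂' Y Y' x := by
  rw [wronskian, h x, hZ.eq_const_mul_add_const_mul_of_eq hZ₁ hZ₂ h, wronskian, wronskian]
  noncomm_ring

theorem mul_wronskian_add_mul_wronskian_eq {a₁ a₂ c₁ c₂ : R}
    (hZ : HasDerivAt Z (Z' x) x) (hZ₁ : HasDerivAt Z₁ (Z₁' x) x) (hZ₂ : HasDerivAt Z₂ (Z₂' x) x)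
    (hY : HasDerivAt Y (Y' x) x) (hY₁ : HasDerivAt Y₁ (Y₁' x) x) (hY₂ : HasDerivAt Y₂ (Y₂' x) x)
    (hZ_eq : ∀ t, Z t = a₁ * Z₁ t + a₂ * Z₂ t) (hY_eq : ∀ t, Y t = Y₁ t * c₁ + Y₂ t * c₂) :
    a₁ * wronskian Z₁ Z₁' Y Y' x + a₂ * wronskian Z₂ Z₂' Y Y' x =
      wronskian Z Z' Y₁ Y₁' x * c₁ + wronskian Z Z' Y₂ Y₂' x * c₂ := by
  rw [← wronskian_of_eq_mul_add_mul_left hZ hZ₁ hZ₂ hZ_eq,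
    wronskian_of_eq_mul_add_mul_right hY hY₁ hY₂ hY_eq]

end Wronskian

theorem scattering_coefficients_symmetry_relations_general
    (m : ℕ) (ρ : ℝ) (hρ : ρ ≠ 0)
    (Fp Fm Fbp Fbm Fp' Fm' Fbp' Fbm' : ℝ → ℝ → Matrix (Fin m) (Fin m) ℂ)
    (A B C D : ℝ → Matrix (Fin m) (Fin m) ℂ)
    (hdFp : ∀ σ ∈ ({ρ, -ρ} : Set ℝ), ∀ x, HasDerivAt (Fp σ) (Fp' σ x) x)
    (hdFm : ∀ σ ∈ ({ρ, -ρ} : Set ℝ), ∀ x, HasDerivAt (Fm σ) (Fm' σ x) x)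
    (hdFbp : ∀ σ ∈ ({ρ, -ρ} : Set ℝ), ∀ x, HasDerivAt (Fbp σ) (Fbp' σ x) x)
    (hdFbm : ∀ σ ∈ ({ρ, -ρ} : Set ℝ), ∀ x, HasDerivAt (Fbm σ) (Fbm' σ x) x)
    -- (ii) the normalization of the Wronskians
    (hWmm : ∀ σ ∈ ({ρ, -ρ} : Set ℝ), ∀ x : ℝ,
      Fbm' σ x * Fm σ x - Fbm σ x * Fm' σ x = 0)
    (hWmm' : ∀ σ ∈ ({ρ, -ρ} : Set ℝ), ∀ x : ℝ,
      Fbm' σ x * Fm (-σ) x - Fbm σ x * Fm' (-σ) x = (-(2 * Complex.I * (σ : ℂ))) • (1 : Matrix (Fin m) (Fin m) ℂ))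
    (hWpp : ∀ σ ∈ ({ρ, -ρ} : Set ℝ), ∀ x : ℝ,
      Fbp' σ x * Fp σ x - Fbp σ x * Fp' σ x = 0)
    (hWpp' : ∀ σ ∈ ({ρ, -ρ} : Set ℝ), ∀ x : ℝ,
      Fbp' σ x * Fp (-σ) x - Fbp σ x * Fp' (-σ) x = (2 * Complex.I * (σ : ℂ)) • (1 : Matrix (Fin m) (Fin m) ℂ))
    -- (iii) the expansions
    (hexpbar : ∀ σ ∈ ({ρ, -ρ} : Set ℝ), ∀ x : ℝ,
      Fbp σ x = (A (-σ))ᴴ * Fbm (-σ) x + (B (-σ))ᴴ * Fbm σ x)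
    (hexpm : ∀ σ ∈ ({ρ, -ρ} : Set ℝ), ∀ x : ℝ,
      Fm σ x = Fp σ x * C σ + Fp (-σ) x * D σ) :
    A ρ = (D (-ρ))ᴴ ∧ B ρ = -(C ρ)ᴴ := by
  have hρ_mem : ρ ∈ ({ρ, -ρ} : Set ℝ) := Set.mem_insert _ _
  have hnegρ_mem : -ρ ∈ ({ρ, -ρ} : Set ℝ) := Set.mem_insert_of_mem _ rfl
  have hc : 2 * Complex.I * (ρ : ℂ) ≠ 0 := by simp [hρ]
  have hFbp : ∀ x, Fbp (-ρ) x = (A ρ)ᴴ * Fbm ρ x + (B ρ)ᴴ * Fbm (-ρ) x := by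
    simpa only [neg_neg] using hexpbar (-ρ) hnegρ_mem
  have hFm_neg : ∀ x, Fm (-ρ) x = Fp (-ρ) x * C (-ρ) + Fp ρ x * D (-ρ) := by
    simpa only [neg_neg] using hexpm (-ρ) hnegρ_mem
  have hWpp'_neg : Fbp' (-ρ) 0 * Fp ρ 0 - Fbp (-ρ) 0 * Fp' ρ 0 =
      -(2 * Complex.I * (ρ : ℂ)) • (1 : Matrix (Fin m) (Fin m) ℂ) := by
    simpa using hWpp' (-ρ) hnegρ_mem 0
  have hWmm'_neg : Fbm' (-ρ) 0 * Fm ρ 0 - Fbm (-ρ) 0 * Fm' ρ 0 =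
      (2 * Complex.I * (ρ : ℂ)) • (1 : Matrix (Fin m) (Fin m) ℂ) := by
    simpa using hWmm' (-ρ) hnegρ_mem 0
  have hAD := mul_wronskian_add_mul_wronskian_eq
    (hdFbp _ hnegρ_mem 0) (hdFbm _ hρ_mem 0) (hdFbm _ hnegρ_mem 0)
    (hdFm _ hnegρ_mem 0) (hdFp _ hnegρ_mem 0) (hdFp _ hρ_mem 0) hFbp hFm_neg
  have hBC := mul_wronskian_add_mul_wronskian_eq
    (hdFbp _ hnegρ_mem 0) (hdFbm _ hρ_mem 0) (hdFbm _ hnegρ_mem 0)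
    (hdFm _ hρ_mem 0) (hdFp _ hρ_mem 0) (hdFp _ hnegρ_mem 0) hFbp (hexpm ρ hρ_mem)
  simp only [wronskian] at hAD hBC
  rw [hWmm' _ hρ_mem, hWmm _ hnegρ_mem, hWpp _ hnegρ_mem, hWpp'_neg] at hAD
  rw [hWmm _ hρ_mem, hWmm'_neg, hWpp _ hnegρ_mem, hWpp'_neg] at hBC
  simp only [mul_zero, zero_mul, add_zero, zero_add, smul_one_mul, mul_smul_one] at hAD hBC
  rw [neg_smul, ← smul_neg] at hBC
  constructor
  · rw [← smul_right_injective _ (neg_ne_zero.2 hc) hAD, conjTranspose_conjTranspose]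
  · rw [← conjTranspose_neg, ← smul_right_injective _ hc hBC, conjTranspose_conjTranspose]

/-- Under the standard Wronskian properties of the Jost solutions
`F_±(·,σ)`, `F̄_±(·,σ)` (for `σ ∈ {ρ, -ρ}`, `ρ` real nonzero) and the expansions
`F_+(x,σ) = F_-(x,-σ)A(σ) + F_-(x,σ)B(σ)`,
`F̄_+(x,σ) = A(-σ)* F̄_-(x,-σ) + B(-σ)* F̄_-(x,σ)`,
`F_-(x,σ) = F_+(x,σ)C(σ) + F_+(x,-σ)D(σ)`,
one has `A(ρ) = D(-ρ)*` and `B(ρ) = -C(ρ)*`. -/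
theorem scattering_coefficients_symmetry_relations
    (m : ℕ) (ρ : ℝ) (hρ : ρ ≠ 0)
    (Fp Fm Fbp Fbm Fp' Fm' Fbp' Fbm' : ℝ → ℝ → Matrix (Fin m) (Fin m) ℂ)
    (A B C D : ℝ → Matrix (Fin m) (Fin m) ℂ)
    -- twice differentiability: the given functions have the given first derivatives,
    -- which are themselves differentiable
    (hdFp : ∀ σ ∈ ({ρ, -ρ} : Set ℝ), ∀ x, HasDerivAt (Fp σ) (Fp' σ x) x)
    (hdFm : ∀ σ ∈ ({ρ, -ρ} : Set ℝ), ∀ x, HasDerivAt (Fm σ) (Fm' σ x) x)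
    (hdFbp : ∀ σ ∈ ({ρ, -ρ} : Set ℝ), ∀ x, HasDerivAt (Fbp σ) (Fbp' σ x) x)
    (hdFbm : ∀ σ ∈ ({ρ, -ρ} : Set ℝ), ∀ x, HasDerivAt (Fbm σ) (Fbm' σ x) x)
    (hd2Fp : ∀ σ ∈ ({ρ, -ρ} : Set ℝ), Differentiable ℝ (Fp' σ))
    (hd2Fm : ∀ σ ∈ ({ρ, -ρ} : Set ℝ), Differentiable ℝ (Fm' σ))
    (hd2Fbp : ∀ σ ∈ ({ρ, -ρ} : Set ℝ), Differentiable ℝ (Fbp' σ))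
    (hd2Fbm : ∀ σ ∈ ({ρ, -ρ} : Set ℝ), Differentiable ℝ (Fbm' σ))
    -- (i) all Wronskians ⟨F̄_±(·,σ'), F_±(·,σ'')⟩ are constant in x
    (hconst : ∀ σ' ∈ ({ρ, -ρ} : Set ℝ), ∀ σ'' ∈ ({ρ, -ρ} : Set ℝ), ∀ x y : ℝ,
      (Fbp' σ' x * Fp σ'' x - Fbp σ' x * Fp' σ'' x
        = Fbp' σ' y * Fp σ'' y - Fbp σ' y * Fp' σ'' y) ∧
      (Fbp' σ' x * Fm σ'' x - Fbp σ' x * Fm' σ'' x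
        = Fbp' σ' y * Fm σ'' y - Fbp σ' y * Fm' σ'' y) ∧
      (Fbm' σ' x * Fp σ'' x - Fbm σ' x * Fp' σ'' x
        = Fbm' σ' y * Fp σ'' y - Fbm σ' y * Fp' σ'' y) ∧
      (Fbm' σ' x * Fm σ'' x - Fbm σ' x * Fm' σ'' x
        = Fbm' σ' y * Fm σ'' y - Fbm σ' y * Fm' σ'' y))
    -- (ii) the normalization of the Wronskians
    (hWmm : ∀ σ ∈ ({ρ, -ρ} : Set ℝ), ∀ x : ℝ,
      Fbm' σ x * Fm σ x - Fbm σ x * Fm' σ x = 0)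
    (hWmm' : ∀ σ ∈ ({ρ, -ρ} : Set ℝ), ∀ x : ℝ,
      Fbm' σ x * Fm (-σ) x - Fbm σ x * Fm' (-σ) x = (-(2 * Complex.I * (σ : ℂ))) • (1 : Matrix (Fin m) (Fin m) ℂ))
    (hWpp : ∀ σ ∈ ({ρ, -ρ} : Set ℝ), ∀ x : ℝ,
      Fbp' σ x * Fp σ x - Fbp σ x * Fp' σ x = 0)
    (hWpp' : ∀ σ ∈ ({ρ, -ρ} : Set ℝ), ∀ x : ℝ,
      Fbp' σ x * Fp (-σ) x - Fbp σ x * Fp' (-σ) x = (2 * Complex.I * (σ : ℂ)) • (1 : Matrix (Fin m) (Fin m) ℂ))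
    -- (iii) the expansions
    (hexp : ∀ σ ∈ ({ρ, -ρ} : Set ℝ), ∀ x : ℝ,
      Fp σ x = Fm (-σ) x * A σ + Fm σ x * B σ)
    (hexpbar : ∀ σ ∈ ({ρ, -ρ} : Set ℝ), ∀ x : ℝ,
      Fbp σ x = (A (-σ))ᴴ * Fbm (-σ) x + (B (-σ))ᴴ * Fbm σ x)
    (hexpm : ∀ σ ∈ ({ρ, -ρ} : Set ℝ), ∀ x : ℝ,
      Fm σ x = Fp σ x * C σ + Fp (-σ) x * D σ) :
    A ρ = (D (-ρ))ᴴ ∧ B ρ = -(C ρ)ᴴ :=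
  scattering_coefficients_symmetry_relations_general m ρ hρ Fp Fm Fbp Fbm Fp' Fm' Fbp' Fbm' A B C D
    hdFp hdFm hdFbp hdFbm hWmm hWmm' hWpp hWpp' hexpbar hexpm
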